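/- Interpolation of A_1 norm functions: let ρ_0, ρ_1 be norm functions on R^d × F^n in the A_1 class with constants C_0, C_1, and 1 ≤ p ≤ ∞. Then the Minkowski functional ρ of the pointwise convex hull K(x) of {u : ρ_0*(x,u)^{1/p'} ρ_1(x,u)^{1/p} ≤ 1} is a norm function satisfying ρ(x,u) ≤ ρ_0*(x,u)^{1/p'} ρ_1(x,u)^{1/p} and ρ*(x,v) ≤ ρ_0(x,v)^{1/p'} ρ_1*(x,v)^{1/p}. -/

import Mathlib

open MeasureTheory ENNReal

variable {𝕜 : Type*} [RCLike 𝕜] {n : ℕ}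

/-- A subset of an `𝕜`-vector space is *symmetric* if it is closed under multiplication by
unimodular scalars. -/
def SymmSet (𝕜 : Type*) [RCLike 𝕜] {E : Type*} [SMul 𝕜 E] (K : Set E) : Prop :=
  ∀ c : 𝕜, ‖c‖ = 1 → ∀ x ∈ K, c • x ∈ K

/-- The smallest closed convex symmetric subset of `𝔽ⁿ` containing a given set. -/
def convK (𝕜 : Type*) [RCLike 𝕜] {n : ℕ} (S : Set (EuclideanSpace 𝕜 (Fin n))) :
    Set (EuclideanSpace 𝕜 (Fin n)) :=
  ⋂₀ {K | IsClosed K ∧ Convex ℝ K ∧ SymmSet 𝕜 K ∧ S ⊆ K}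

/-- An axis-parallel cube in `ℝᵈ`. -/
def IsCube (d : ℕ) (Q : Set (Fin d → ℝ)) : Prop :=
  ∃ (a : Fin d → ℝ) (r : ℝ), 0 < r ∧ Q = Set.univ.pi fun i => Set.Icc (a i) (a i + r)

/-- A *norm function* on `ℝᵈ × 𝔽ⁿ`: measurable in the first variable and a norm in the
second. -/
def IsNormFun (d : ℕ) (ρ : (Fin d → ℝ) → EuclideanSpace 𝕜 (Fin n) → ℝ) : Prop :=
  (∀ u, Measurable fun x => ρ x u) ∧
  ∀ x, (∀ u v, ρ x (u + v) ≤ ρ x u + ρ x v) ∧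
    (∀ (c : 𝕜) u, ρ x (c • u) = ‖c‖ * ρ x u) ∧
    (∀ u, ρ x u = 0 → u = 0)

/-- The pointwise dual `ρ*(x,v) = sup_{u ≠ 0} |u·v| / ρ(x,u)` of a norm function, with values
in `ℝ≥0∞`. -/
noncomputable def dualNormFun (d : ℕ) (ρ : (Fin d → ℝ) → EuclideanSpace 𝕜 (Fin n) → ℝ)
    (x : Fin d → ℝ) (v : EuclideanSpace 𝕜 (Fin n)) : ℝ≥0∞ :=
  ⨆ u : {u : EuclideanSpace 𝕜 (Fin n) // u ≠ 0},
    (‖(inner 𝕜 u.1 v : 𝕜)‖₊ : ℝ≥0∞) / ENNReal.ofReal (ρ x u.1)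

/-- The `A₁` condition for a norm function, with constant `C`. -/
def NormFunA1 (d : ℕ) (ρ : (Fin d → ℝ) → EuclideanSpace 𝕜 (Fin n) → ℝ) (C : ℝ) : Prop :=
  ∀ Q : Set (Fin d → ℝ), IsCube d Q → ∀ u : EuclideanSpace 𝕜 (Fin n),
    ∃ v : EuclideanSpace 𝕜 (Fin n), v ≠ 0 ∧
      (∫⁻ x in Q, ENNReal.ofReal (ρ x u) ∂volume) *
          essSup (fun x => dualNormFun d ρ x v) (volume.restrict Q) ≤
        ENNReal.ofReal C * (‖(inner 𝕜 u v : 𝕜)‖₊ : ℝ≥0∞) * volume Q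

/-- The pointwise convex hull set `K(x)` of
`{u : ρ₀*(x,u)^{1/p'} ρ₁(x,u)^{1/p} ≤ 1}`, where `q = p'`. -/
noncomputable def interpBody (d : ℕ)
    (ρ₀ ρ₁ : (Fin d → ℝ) → EuclideanSpace 𝕜 (Fin n) → ℝ) (p q : ℝ≥0∞) (x : Fin d → ℝ) :
    Set (EuclideanSpace 𝕜 (Fin n)) :=
  convK 𝕜 {u | (dualNormFun d ρ₀ x u) ^ (q⁻¹.toReal) *
    (ENNReal.ofReal (ρ₁ x u)) ^ (p⁻¹.toReal) ≤ 1}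

/-- The Minkowski functional of `interpBody`. -/
noncomputable def interpNormFun (d : ℕ)
    (ρ₀ ρ₁ : (Fin d → ℝ) → EuclideanSpace 𝕜 (Fin n) → ℝ) (p q : ℝ≥0∞)
    (x : Fin d → ℝ) (u : EuclideanSpace 𝕜 (Fin n)) : ℝ :=
  sInf {t : ℝ | 0 < t ∧ t⁻¹ • u ∈ interpBody d ρ₀ ρ₁ p q x}

/-!
Write `φ(u) = ρ₀*(x,u)^{1/p'} ρ₁(x,u)^{1/p}`. It is absolutely homogeneous and comparable to the
Euclidean norm, so Hahn–Banach identifies the closed convex symmetric hull of `{φ ≤ 1}` with the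
sublevel set `{φ** ≤ 1}` of the bidual, whose Minkowski functional is `ρ = φ**`. Hence `ρ` is a
norm, `ρ = φ** ≤ φ`, and `ρ* = φ*** ≤ φ* ≤ ρ₀^{1/p'} (ρ₁*)^{1/p}`, the last step by the pointwise
inequality `|u·v| ≤ (ρ₀*(x,u)ρ₀(x,v))^{1/p'}(ρ₁(x,u)ρ₁*(x,v))^{1/p}`. Measurability in `x`
survives each dualization because the supremum may be taken over a countable dense set of
directions, along which the terms are continuous.
-/

open scoped NNReal InnerProductSpace

theorem RCLike.enorm_ofReal (t : ℝ) : ‖(t : 𝕜)‖ₑ = ‖t‖ₑ := by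
  rw [← ofReal_norm, RCLike.norm_ofReal, Real.enorm_eq_ofReal_abs]

namespace ENNReal

variable {r s : ℝ}

theorem rpow_mul_rpow_self (hr : 0 ≤ r) (hs : 0 ≤ s) (hrs : r + s = 1) (x : ℝ≥0∞) :
    x ^ r * x ^ s = x := by
  rw [← rpow_add_of_nonneg r s hr hs, hrs, rpow_one]

theorem le_rpow_mul_rpow (hr : 0 ≤ r) (hs : 0 ≤ s) (hrs : r + s = 1) {x a b : ℝ≥0∞}
    (ha : x ≤ a) (hb : x ≤ b) : x ≤ a ^ r * b ^ s :=
  calc x = x ^ r * x ^ s := (rpow_mul_rpow_self hr hs hrs x).symm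
    _ ≤ a ^ r * b ^ s := by gcongr

theorem mul_rpow_mul_mul_rpow (hr : 0 ≤ r) (hs : 0 ≤ s) (a b x y : ℝ≥0∞) :
    (a * x) ^ r * (b * y) ^ s = a ^ r * b ^ s * (x ^ r * y ^ s) := by
  rw [mul_rpow_of_nonneg _ _ hr, mul_rpow_of_nonneg _ _ hs]
  ring

theorem toReal_inv_add_toReal_inv {p q : ℝ≥0∞} (hpq : p⁻¹ + q⁻¹ = 1) :
    q⁻¹.toReal + p⁻¹.toReal = 1 := by
  have hfin := add_ne_top.1 (hpq ▸ one_ne_top)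
  rw [add_comm, ← toReal_add hfin.1 hfin.2, hpq, toReal_one]

end ENNReal

theorem Real.sInf_setOf_pos_and_le {a : ℝ} (ha : 0 ≤ a) : sInf {t : ℝ | 0 < t ∧ a ≤ t} = a := by
  rcases ha.eq_or_lt with rfl | ha
  · have : {t : ℝ | 0 < t ∧ 0 ≤ t} = Set.Ioi 0 := by
      ext t
      exact ⟨fun h => h.1, fun h => ⟨h, h.le⟩⟩
    rw [this, csInf_Ioi]
  · have : {t : ℝ | 0 < t ∧ a ≤ t} = Set.Ici a := by
      ext t
      exact ⟨fun h => h.2, fun h => ⟨ha.trans_le h, h⟩⟩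
    rw [this, csInf_Ici]

theorem Continuous.rpow_mul_rpow {X : Type*} [TopologicalSpace X] {f g : X → ℝ≥0∞} {r s : ℝ}
    (hf : Continuous f) (hg : Continuous g) (hf' : ∀ u, f u ≠ ∞) (hg' : ∀ u, g u ≠ ∞)
    (hr : 0 ≤ r) (hs : 0 ≤ s) : Continuous fun u => f u ^ r * g u ^ s :=
  (ENNReal.continuous_rpow_const.comp hf).ennreal_mul (ENNReal.continuous_rpow_const.comp hg)
    (fun u => .inr (ENNReal.rpow_ne_top_of_nonneg hs (hg' u)))
    (fun u => .inr (ENNReal.rpow_ne_top_of_nonneg hr (hf' u)))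

variable {E : Type*} [NormedAddCommGroup E] [InnerProductSpace 𝕜 E]

variable (𝕜) in
noncomputable def edual (φ : E → ℝ≥0∞) (v : E) : ℝ≥0∞ :=
  ⨆ u : {u : E // u ≠ 0}, ‖⟪u.1, v⟫_𝕜‖ₑ / φ u.1

theorem dualNormFun_eq_edual (d : ℕ) (ρ : (Fin d → ℝ) → EuclideanSpace 𝕜 (Fin n) → ℝ)
    (x : Fin d → ℝ) : dualNormFun d ρ x = edual 𝕜 fun u => ENNReal.ofReal (ρ x u) := rfl

variable (𝕜) in
def AbsHomogeneous (φ : E → ℝ≥0∞) : Prop :=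
  ∀ (c : 𝕜) u, φ (c • u) = ‖c‖ₑ * φ u

def EquivalentToNorm (φ : E → ℝ≥0∞) : Prop :=
  ∃ c C : ℝ≥0, ∀ u, ‖u‖ₑ ≤ c * φ u ∧ φ u ≤ C * ‖u‖ₑ

variable (𝕜) in
def IsNorm (N : E → ℝ) : Prop :=
  (∀ u v, N (u + v) ≤ N u + N v) ∧ (∀ (c : 𝕜) u, N (c • u) = ‖c‖ * N u) ∧
    ∀ u, N u = 0 → u = 0

theorem enorm_inner_comm (u v : E) : ‖⟪u, v⟫_𝕜‖ₑ = ‖⟪v, u⟫_𝕜‖ₑ := by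
  rw [← inner_conj_symm, RCLike.enorm_conj]

theorem AbsHomogeneous.map_zero {f : E → ℝ≥0∞} (hf : AbsHomogeneous 𝕜 f) : f 0 = 0 := by
  simpa using hf (0 : 𝕜) 0

theorem enorm_inner_le_enorm_mul_enorm (u v : E) : ‖⟪u, v⟫_𝕜‖ₑ ≤ ‖u‖ₑ * ‖v‖ₑ := by
  simpa [enorm, ← ENNReal.coe_mul] using nnnorm_inner_le_nnnorm (𝕜 := 𝕜) u v

section edual

variable {φ : E → ℝ≥0∞}

theorem le_edual {u : E} (hu : u ≠ 0) (v : E) : ‖⟪u, v⟫_𝕜‖ₑ / φ u ≤ edual 𝕜 φ v :=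
  le_iSup (fun w : {w : E // w ≠ 0} => ‖⟪w.1, v⟫_𝕜‖ₑ / φ w.1) ⟨u, hu⟩

theorem edual_add_le (v w : E) : edual 𝕜 φ (v + w) ≤ edual 𝕜 φ v + edual 𝕜 φ w := by
  refine iSup_le fun ⟨u, hu⟩ => ?_
  calc ‖⟪u, v + w⟫_𝕜‖ₑ / φ u ≤ (‖⟪u, v⟫_𝕜‖ₑ + ‖⟪u, w⟫_𝕜‖ₑ) / φ u := by
        gcongr
        rw [inner_add_right]
        exact enorm_add_le _ _
    _ = ‖⟪u, v⟫_𝕜‖ₑ / φ u + ‖⟪u, w⟫_𝕜‖ₑ / φ u := ENNReal.add_div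
    _ ≤ edual 𝕜 φ v + edual 𝕜 φ w := add_le_add (le_edual hu v) (le_edual hu w)

theorem absHomogeneous_edual : AbsHomogeneous 𝕜 (edual 𝕜 φ) := by
  intro c v
  simp only [edual, ENNReal.mul_iSup, inner_smul_right, enorm_mul, mul_div_assoc]

end edual

namespace EquivalentToNorm

variable {φ : E → ℝ≥0∞} (hφ : EquivalentToNorm φ)
include hφ

theorem ne_top (u : E) : φ u ≠ ∞ := by
  obtain ⟨c, C, h⟩ := hφ
  exact ((h u).2.trans_lt (ENNReal.mul_lt_top ENNReal.coe_lt_top enorm_lt_top)).ne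

theorem ne_zero {u : E} (hu : u ≠ 0) : φ u ≠ 0 := by
  obtain ⟨c, C, h⟩ := hφ
  intro h0
  simpa [h0, hu] using (h u).1

theorem enorm_inner_le (u v : E) : ‖⟪u, v⟫_𝕜‖ₑ ≤ φ u * edual 𝕜 φ v := by
  rcases eq_or_ne u 0 with rfl | hu
  · simp
  · rw [mul_comm, ← ENNReal.div_le_iff_le_mul (.inl (hφ.ne_zero hu)) (.inl (hφ.ne_top u))]
    exact le_edual hu v

theorem edual_edual_le (u : E) : edual 𝕜 (edual 𝕜 φ) u ≤ φ u :=
  iSup_le fun v => ENNReal.div_le_of_le_mul <| by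
    rw [enorm_inner_comm]
    exact hφ.enorm_inner_le u v.1

protected theorem edual : EquivalentToNorm (edual 𝕜 φ) := by
  have hpair := hφ.enorm_inner_le (𝕜 := 𝕜)
  obtain ⟨c, C, h⟩ := hφ
  refine ⟨C, c, fun v => ⟨?_, iSup_le fun u => ENNReal.div_le_of_le_mul ?_⟩⟩
  · rcases eq_or_ne v 0 with rfl | hv
    · simp
    have hsq : ‖v‖ₑ * ‖v‖ₑ ≤ ‖v‖ₑ * (C * edual 𝕜 φ v) := by
      calc ‖v‖ₑ * ‖v‖ₑ = ‖⟪v, v⟫_𝕜‖ₑ := by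
            rw [inner_self_eq_norm_sq_to_K, enorm_pow, RCLike.enorm_ofReal, enorm_norm, sq]
        _ ≤ φ v * edual 𝕜 φ v := hpair v v
        _ ≤ C * ‖v‖ₑ * edual 𝕜 φ v := by gcongr; exact (h v).2
        _ = ‖v‖ₑ * (C * edual 𝕜 φ v) := by ring
    exact (ENNReal.mul_le_mul_iff_right (by simpa using hv) enorm_ne_top).1 hsq
  · calc ‖⟪u.1, v⟫_𝕜‖ₑ ≤ ‖u.1‖ₑ * ‖v‖ₑ := enorm_inner_le_enorm_mul_enorm _ _
      _ ≤ c * φ u * ‖v‖ₑ := by gcongr; exact (h u).1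
      _ = c * ‖v‖ₑ * φ u := by ring

end EquivalentToNorm

section GeometricMean

variable {f g : E → ℝ≥0∞} {r s : ℝ}

theorem AbsHomogeneous.rpow_mul_rpow (hf : AbsHomogeneous 𝕜 f) (hg : AbsHomogeneous 𝕜 g)
    (hr : 0 ≤ r) (hs : 0 ≤ s) (hrs : r + s = 1) :
    AbsHomogeneous 𝕜 fun u => f u ^ r * g u ^ s := by
  intro c u
  dsimp only
  rw [hf, hg, ENNReal.mul_rpow_mul_mul_rpow hr hs, ENNReal.rpow_mul_rpow_self hr hs hrs]

theorem EquivalentToNorm.rpow_mul_rpow (hf : EquivalentToNorm f) (hg : EquivalentToNorm g)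
    (hr : 0 ≤ r) (hs : 0 ≤ s) (hrs : r + s = 1) :
    EquivalentToNorm fun u => f u ^ r * g u ^ s := by
  obtain ⟨c₀, C₀, hf⟩ := hf
  obtain ⟨c₁, C₁, hg⟩ := hg
  refine ⟨c₀ ^ r * c₁ ^ s, C₀ ^ r * C₁ ^ s, fun u => ⟨?_, ?_⟩⟩
  all_goals
    push_cast [ENNReal.coe_rpow_of_nonneg _ hr, ENNReal.coe_rpow_of_nonneg _ hs]
    rw [← ENNReal.rpow_mul_rpow_self hr hs hrs ‖u‖ₑ, ← ENNReal.mul_rpow_mul_mul_rpow hr hs]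
    gcongr
  exacts [(hf u).1, (hg u).1, (hf u).2, (hg u).2]

theorem edual_rpow_mul_rpow_le {φ₀ φ₁ : E → ℝ≥0∞} (h₀ : EquivalentToNorm φ₀)
    (h₁ : EquivalentToNorm φ₁) (hr : 0 ≤ r) (hs : 0 ≤ s) (hrs : r + s = 1) (v : E) :
    edual 𝕜 (fun w => edual 𝕜 φ₀ w ^ r * φ₁ w ^ s) v ≤ φ₀ v ^ r * edual 𝕜 φ₁ v ^ s := by
  refine iSup_le fun w => ENNReal.div_le_of_le_mul ?_
  rw [mul_comm, ← ENNReal.mul_rpow_mul_mul_rpow hr hs]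
  refine ENNReal.le_rpow_mul_rpow hr hs hrs ?_ (h₁.enorm_inner_le w.1 v)
  rw [enorm_inner_comm, mul_comm]
  exact h₀.enorm_inner_le v w.1

end GeometricMean

section FiniteDimensional

variable [NormedSpace ℝ E] [IsScalarTower ℝ 𝕜 E] {f : E → ℝ≥0∞}

theorem AbsHomogeneous.real_smul (hf : AbsHomogeneous 𝕜 f) (t : ℝ) (u : E) :
    f (t • u) = ‖t‖ₑ * f u := by
  rw [RCLike.real_smul_eq_coe_smul (K := 𝕜), hf, RCLike.enorm_ofReal]

variable [FiniteDimensional ℝ E]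

theorem AbsHomogeneous.continuous_of_subadditive (hf : AbsHomogeneous 𝕜 f)
    (hadd : ∀ u v, f (u + v) ≤ f u + f v) (htop : ∀ u, f u ≠ ∞) : Continuous f := by
  have hconv : ConvexOn ℝ Set.univ fun u => (f u).toReal := by
    refine ⟨convex_univ, fun x _ y _ a b ha hb _ => ?_⟩
    calc (f (a • x + b • y)).toReal ≤ (f (a • x)).toReal + (f (b • y)).toReal := by
          rw [← ENNReal.toReal_add (htop _) (htop _)]
          exact ENNReal.toReal_mono (by simp [htop]) (hadd _ _)
      _ = a • (f x).toReal + b • (f y).toReal := by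
          simp [hf.real_smul, abs_of_nonneg ha, abs_of_nonneg hb]
  have hf_eq : f = fun u => ENNReal.ofReal (f u).toReal :=
    funext fun u => (ENNReal.ofReal_toReal (htop u)).symm
  rw [hf_eq]
  exact ENNReal.continuous_ofReal.comp hconv.locallyLipschitz.continuous

theorem EquivalentToNorm.of_continuous (hc : Continuous f) (hf : AbsHomogeneous 𝕜 f)
    (h0 : ∀ u, f u = 0 → u = 0) (htop : ∀ u, f u ≠ ∞) : EquivalentToNorm f := by
  have : ProperSpace E := FiniteDimensional.proper_real E
  rcases subsingleton_or_nontrivial E with hE | hE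
  · exact ⟨0, 0, fun u => by simp [Subsingleton.elim u 0, hf.map_zero]⟩
  have hS : (Metric.sphere (0 : E) 1).Nonempty := NormedSpace.sphere_nonempty.2 zero_le_one
  obtain ⟨u₀, hu₀, hmin⟩ := (isCompact_sphere (0 : E) 1).exists_isMinOn hS hc.continuousOn
  obtain ⟨u₁, -, hmax⟩ := (isCompact_sphere (0 : E) 1).exists_isMaxOn hS hc.continuousOn
  have hfu₀ : f u₀ ≠ 0 := fun h => by simp [h0 u₀ h] at hu₀
  refine ⟨(f u₀)⁻¹.toNNReal, (f u₁).toNNReal, fun u => ?_⟩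
  rw [ENNReal.coe_toNNReal (ENNReal.inv_ne_top.2 hfu₀), ENNReal.coe_toNNReal (htop u₁)]
  rcases eq_or_ne u 0 with rfl | hu
  · simp [hf.map_zero]
  have hnorm : ‖u‖ ≠ 0 := norm_ne_zero_iff.2 hu
  have hw : ‖u‖⁻¹ • u ∈ Metric.sphere (0 : E) 1 := by
    simp [norm_smul, hnorm]
  have hfu : f u = ‖u‖ₑ * f (‖u‖⁻¹ • u) := by
    conv_lhs => rw [← smul_inv_smul₀ hnorm u]
    rw [hf.real_smul, enorm_norm]
  rw [hfu]
  constructor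
  · calc ‖u‖ₑ = ‖u‖ₑ * ((f u₀)⁻¹ * f u₀) := by rw [ENNReal.inv_mul_cancel hfu₀ (htop u₀), mul_one]
      _ ≤ ‖u‖ₑ * ((f u₀)⁻¹ * f (‖u‖⁻¹ • u)) := by gcongr; exact hmin hw
      _ = (f u₀)⁻¹ * (‖u‖ₑ * f (‖u‖⁻¹ • u)) := by ring
  · rw [mul_comm]
    gcongr
    exact hmax hw

theorem EquivalentToNorm.continuous_edual {φ : E → ℝ≥0∞} (hφ : EquivalentToNorm φ) :
    Continuous (edual 𝕜 φ) :=
  absHomogeneous_edual.continuous_of_subadditive edual_add_le hφ.edual.ne_top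

end FiniteDimensional

theorem measurable_edual [SecondCountableTopology E] {α : Type*} [MeasurableSpace α]
    {Φ : α → E → ℝ≥0∞} (hmeas : ∀ u, Measurable fun x => Φ x u)
    (hcont : ∀ x, Continuous (Φ x)) (hΦ : ∀ x, EquivalentToNorm (Φ x)) (v : E) :
    Measurable fun x => edual 𝕜 (Φ x) v := by
  obtain ⟨D, hDc, hD⟩ := TopologicalSpace.exists_countable_dense {u : E // u ≠ 0}
  have : Countable D := hDc.to_subtype
  have hsup : ∀ x, edual 𝕜 (Φ x) v = ⨆ u : D, ‖⟪u.1.1, v⟫_𝕜‖ₑ / Φ x u.1.1 := fun x =>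
    (hD.ciSup' <| ((continuous_subtype_val.inner continuous_const).enorm).ennreal_mul
      ((hcont x).comp continuous_subtype_val).inv
      (fun u => .inr (ENNReal.inv_ne_top.2 ((hΦ x).ne_zero u.2)))
      (fun _ => .inr enorm_ne_top)).symm
  simp_rw [hsup]
  exact .iSup fun u => measurable_const.div (hmeas u.1.1)

theorem AbsHomogeneous.symmSet_sublevel {ψ : E → ℝ≥0∞} (hψ : AbsHomogeneous 𝕜 ψ) :
    SymmSet 𝕜 {u | ψ u ≤ 1} := by
  intro c hc u hu
  rwa [Set.mem_ofPred_eq, hψ, ← ofReal_norm, hc, ENNReal.ofReal_one, one_mul]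

section Sublevel

variable [NormedSpace ℝ E] [IsScalarTower ℝ 𝕜 E] {ψ : E → ℝ≥0∞}

theorem AbsHomogeneous.convex_sublevel (hψ : AbsHomogeneous 𝕜 ψ)
    (hadd : ∀ u v, ψ (u + v) ≤ ψ u + ψ v) : Convex ℝ {u | ψ u ≤ 1} := by
  intro x hx y hy a b ha hb hab
  calc ψ (a • x + b • y) ≤ ‖a‖ₑ * ψ x + ‖b‖ₑ * ψ y := by
        rw [← hψ.real_smul, ← hψ.real_smul]; exact hadd _ _
    _ ≤ ‖a‖ₑ * 1 + ‖b‖ₑ * 1 := by gcongr <;> assumption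
    _ = 1 := by
        rw [mul_one, mul_one, Real.enorm_eq_ofReal ha, Real.enorm_eq_ofReal hb,
          ← ENNReal.ofReal_add ha hb, hab, ENNReal.ofReal_one]

theorem AbsHomogeneous.sInf_sublevel (hψ : AbsHomogeneous 𝕜 ψ) {u : E} (hu : ψ u ≠ ∞) :
    sInf {t : ℝ | 0 < t ∧ t⁻¹ • u ∈ {w | ψ w ≤ 1}} = (ψ u).toReal := by
  have hmem : ∀ t : ℝ, 0 < t → (t⁻¹ • u ∈ {w | ψ w ≤ 1} ↔ (ψ u).toReal ≤ t) := fun t ht => by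
    rw [Set.mem_ofPred_eq, hψ.real_smul, Real.enorm_eq_ofReal (inv_nonneg.2 ht.le),
      ENNReal.ofReal_inv_of_pos ht,
      ENNReal.inv_mul_le_iff (by simpa using ht) ENNReal.ofReal_ne_top,
      mul_one, ENNReal.le_ofReal_iff_toReal_le hu ht.le]
  rw [← Real.sInf_setOf_pos_and_le (ENNReal.toReal_nonneg (a := ψ u))]
  congr 1
  ext t
  exact and_congr_right (hmem t)

end Sublevel

namespace IsNorm

variable {N : E → ℝ} (hN : IsNorm 𝕜 N)
include hN

theorem nonneg (u : E) : 0 ≤ N u := by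
  have h := hN.1 u ((-1 : 𝕜) • u)
  rw [hN.2.1, neg_smul, one_smul, add_neg_cancel] at h
  have h0 := hN.2.1 0 0
  simp only [zero_smul, norm_zero, zero_mul] at h0
  simp only [norm_neg, norm_one, one_mul, h0] at h
  linarith

theorem absHomogeneous_ofReal : AbsHomogeneous 𝕜 fun u => ENNReal.ofReal (N u) := by
  intro c u
  dsimp only
  rw [hN.2.1, ENNReal.ofReal_mul (norm_nonneg c), ofReal_norm]

variable [NormedSpace ℝ E] [IsScalarTower ℝ 𝕜 E] [FiniteDimensional ℝ E]

theorem continuous_ofReal : Continuous fun u => ENNReal.ofReal (N u) :=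
  hN.absHomogeneous_ofReal.continuous_of_subadditive
    (fun u v => (ENNReal.ofReal_le_ofReal (hN.1 u v)).trans ENNReal.ofReal_add_le)
    fun _ => ENNReal.ofReal_ne_top

theorem equivalentToNorm_ofReal : EquivalentToNorm fun u => ENNReal.ofReal (N u) :=
  .of_continuous hN.continuous_ofReal hN.absHomogeneous_ofReal
    (fun u hu => hN.2.2 u ((hN.nonneg u).antisymm' (ENNReal.ofReal_eq_zero.1 hu)))
    fun _ => ENNReal.ofReal_ne_top

end IsNorm

theorem IsNormFun.isNorm {d : ℕ} {ρ : (Fin d → ℝ) → EuclideanSpace 𝕜 (Fin n) → ℝ}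
    (hρ : IsNormFun d ρ) (x : Fin d → ℝ) : IsNorm 𝕜 (ρ x) :=
  hρ.2 x

theorem EquivalentToNorm.isNorm_toReal {ψ : E → ℝ≥0∞} (hψ : EquivalentToNorm ψ)
    (hhom : AbsHomogeneous 𝕜 ψ) (hadd : ∀ u v, ψ (u + v) ≤ ψ u + ψ v) :
    IsNorm 𝕜 fun u => (ψ u).toReal := by
  refine ⟨fun u v => ?_, fun c u => ?_, fun u hu => ?_⟩
  · rw [← ENNReal.toReal_add (hψ.ne_top u) (hψ.ne_top v)]
    exact ENNReal.toReal_mono (ENNReal.add_ne_top.2 ⟨hψ.ne_top u, hψ.ne_top v⟩) (hadd u v)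
  · simp [hhom c u]
  · by_contra h
    exact hψ.ne_zero h ((ENNReal.toReal_eq_zero_iff _).1 hu |>.resolve_right (hψ.ne_top u))

theorem edual_le_of_forall_le_one {φ : E → ℝ≥0∞} (hφ : EquivalentToNorm φ)
    (hhom : AbsHomogeneous 𝕜 φ) {z : E} {a : ℝ≥0∞}
    (h : ∀ w, φ w ≤ 1 → ‖⟪w, z⟫_𝕜‖ₑ ≤ a) : edual 𝕜 φ z ≤ a := by
  refine iSup_le fun ⟨w, hw⟩ => ENNReal.div_le_of_le_mul ?_
  set t : 𝕜 := ((φ w).toReal : 𝕜)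
  have ht : ‖t‖ₑ = φ w := by
    rw [RCLike.enorm_ofReal, Real.enorm_toReal (hφ.ne_top w)]
  have ht0 : t ≠ 0 := by
    rw [← enorm_ne_zero, ht]
    exact hφ.ne_zero hw
  have hw' : φ (t⁻¹ • w) ≤ 1 := by
    rw [hhom, enorm_inv ht0, ht, ENNReal.inv_mul_cancel (hφ.ne_zero hw) (hφ.ne_top w)]
  calc ‖⟪w, z⟫_𝕜‖ₑ = ‖t‖ₑ * ‖⟪t⁻¹ • w, z⟫_𝕜‖ₑ := by
        rw [inner_smul_left, enorm_mul, RCLike.enorm_conj, ← mul_assoc, enorm_inv ht0,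
          ENNReal.mul_inv_cancel (by simpa using ht0) enorm_ne_top, one_mul]
    _ ≤ a * φ w := by rw [ht, mul_comm]; gcongr; exact h _ hw'

theorem sublevel_edual_edual_subset [NormedSpace ℝ E] [IsScalarTower ℝ 𝕜 E] [CompleteSpace E]
    {φ : E → ℝ≥0∞} (hφ : EquivalentToNorm φ) (hhom : AbsHomogeneous 𝕜 φ) {K : Set E}
    (hKc : IsClosed K) (hKconv : Convex ℝ K) (hKs : SymmSet 𝕜 K) (hK : {u | φ u ≤ 1} ⊆ K) :
    {u | edual 𝕜 (edual 𝕜 φ) u ≤ 1} ⊆ K := by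
  intro u hu
  by_contra huK
  obtain ⟨f, α, hfK, hfu⟩ := RCLike.geometric_hahn_banach_closed_point (𝕜 := 𝕜) hKconv hKc huK
  set z := (InnerProductSpace.toDual 𝕜 E).symm f
  have hz : ∀ w, ⟪z, w⟫_𝕜 = f w := fun w => InnerProductSpace.toDual_symm_apply
  have hnorm_le : ∀ w ∈ K, ‖f w‖ ≤ α := by
    intro w hw
    obtain ⟨c, hc, hcw⟩ := RCLike.exists_norm_eq_mul_self (f w)
    have := hfK _ (hKs c hc w hw)
    rw [map_smul, smul_eq_mul, ← hcw, RCLike.ofReal_re] at this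
    exact this.le
  have hdual : edual 𝕜 φ z ≤ ENNReal.ofReal α := by
    refine edual_le_of_forall_le_one hφ hhom fun w hw => ?_
    rw [enorm_inner_comm, hz, ← ofReal_norm]
    exact ENNReal.ofReal_le_ofReal (hnorm_le w (hK hw))
  have hzu : ‖f u‖ₑ ≤ ENNReal.ofReal α := by
    calc ‖f u‖ₑ = ‖⟪z, u⟫_𝕜‖ₑ := by rw [hz]
      _ ≤ edual 𝕜 φ z * edual 𝕜 (edual 𝕜 φ) u := hφ.edual.enorm_inner_le z u
      _ ≤ ENNReal.ofReal α * 1 := by gcongr; exact hu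
      _ = _ := mul_one _
  rw [← ofReal_norm] at hzu
  have hα : 0 ≤ α := by simpa using hnorm_le 0 (hK (by simp [hhom.map_zero]))
  have := (ENNReal.ofReal_le_ofReal_iff hα).1 hzu
  linarith [RCLike.re_le_norm (f u)]

theorem convK_sublevel_eq {φ : EuclideanSpace 𝕜 (Fin n) → ℝ≥0∞} (hφ : EquivalentToNorm φ)
    (hhom : AbsHomogeneous 𝕜 φ) :
    convK 𝕜 {u | φ u ≤ 1} = {u | edual 𝕜 (edual 𝕜 φ) u ≤ 1} := by
  refine Set.Subset.antisymm (Set.sInter_subset_of_mem ⟨?_, ?_, ?_, ?_⟩)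
    (Set.subset_sInter fun K ⟨hKc, hKconv, hKs, hK⟩ =>
      sublevel_edual_edual_subset hφ hhom hKc hKconv hKs hK)
  · exact isClosed_le hφ.edual.continuous_edual continuous_const
  · exact absHomogeneous_edual.convex_sublevel edual_add_le
  · exact absHomogeneous_edual.symmSet_sublevel
  · exact fun u hu => (hφ.edual_edual_le u).trans hu

section Interpolation

variable {d : ℕ} {ρ₀ ρ₁ : (Fin d → ℝ) → EuclideanSpace 𝕜 (Fin n) → ℝ} {p q : ℝ≥0∞}

noncomputable def interpFun (d : ℕ) (ρ₀ ρ₁ : (Fin d → ℝ) → EuclideanSpace 𝕜 (Fin n) → ℝ)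
    (p q : ℝ≥0∞) (x : Fin d → ℝ) (u : EuclideanSpace 𝕜 (Fin n)) : ℝ≥0∞ :=
  edual 𝕜 (fun w => ENNReal.ofReal (ρ₀ x w)) u ^ q⁻¹.toReal * ENNReal.ofReal (ρ₁ x u) ^ p⁻¹.toReal

theorem equivalentToNorm_interpFun (hρ₀ : IsNormFun d ρ₀) (hρ₁ : IsNormFun d ρ₁)
    (hpq : p⁻¹ + q⁻¹ = 1) (x : Fin d → ℝ) :
    EquivalentToNorm (interpFun d ρ₀ ρ₁ p q x) :=
  (hρ₀.isNorm x).equivalentToNorm_ofReal.edual.rpow_mul_rpow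
    (hρ₁.isNorm x).equivalentToNorm_ofReal ENNReal.toReal_nonneg ENNReal.toReal_nonneg
    (ENNReal.toReal_inv_add_toReal_inv hpq)

theorem absHomogeneous_interpFun (hρ₁ : IsNormFun d ρ₁) (hpq : p⁻¹ + q⁻¹ = 1)
    (x : Fin d → ℝ) :
    AbsHomogeneous 𝕜 (interpFun d ρ₀ ρ₁ p q x) :=
  (absHomogeneous_edual (φ := fun w => ENNReal.ofReal (ρ₀ x w))).rpow_mul_rpow
    (hρ₁.isNorm x).absHomogeneous_ofReal
    ENNReal.toReal_nonneg ENNReal.toReal_nonneg (ENNReal.toReal_inv_add_toReal_inv hpq)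

theorem interpNormFun_eq (hρ₀ : IsNormFun d ρ₀) (hρ₁ : IsNormFun d ρ₁)
    (hpq : p⁻¹ + q⁻¹ = 1) (x : Fin d → ℝ) (u : EuclideanSpace 𝕜 (Fin n)) :
    interpNormFun d ρ₀ ρ₁ p q x u =
      (edual 𝕜 (edual 𝕜 (interpFun d ρ₀ ρ₁ p q x)) u).toReal := by
  have hφ := equivalentToNorm_interpFun hρ₀ hρ₁ hpq x
  change sInf {t : ℝ | 0 < t ∧ t⁻¹ • u ∈ convK 𝕜 {w | interpFun d ρ₀ ρ₁ p q x w ≤ 1}} = _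
  rw [convK_sublevel_eq hφ (absHomogeneous_interpFun hρ₁ hpq x)]
  exact absHomogeneous_edual.sInf_sublevel (hφ.edual.edual.ne_top u)

theorem measurable_interpNormFun (hρ₀ : IsNormFun d ρ₀) (hρ₁ : IsNormFun d ρ₁)
    (hpq : p⁻¹ + q⁻¹ = 1) (u : EuclideanSpace 𝕜 (Fin n)) :
    Measurable fun x => interpNormFun d ρ₀ ρ₁ p q x u := by
  have h₀ x := (hρ₀.isNorm x).equivalentToNorm_ofReal
  have hφ := equivalentToNorm_interpFun hρ₀ hρ₁ hpq
  have hcont x : Continuous (interpFun d ρ₀ ρ₁ p q x) :=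
    (h₀ x).continuous_edual.rpow_mul_rpow (hρ₁.isNorm x).continuous_ofReal (h₀ x).edual.ne_top
      (fun _ => ENNReal.ofReal_ne_top) ENNReal.toReal_nonneg ENNReal.toReal_nonneg
  have hmeas w : Measurable fun x => interpFun d ρ₀ ρ₁ p q x w :=
    ((measurable_edual (fun w => (hρ₀.1 w).ennreal_ofReal)
      (fun x => (hρ₀.isNorm x).continuous_ofReal) h₀ w).pow_const _).mul
      ((hρ₁.1 w).ennreal_ofReal.pow_const _)
  simp_rw [interpNormFun_eq hρ₀ hρ₁ hpq]
  exact (measurable_edual (measurable_edual hmeas hcont hφ)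
    (fun x => (hφ x).continuous_edual) (fun x => (hφ x).edual) u).ennreal_toReal

end Interpolation

theorem stmt18_general (d : ℕ) (ρ₀ ρ₁ : (Fin d → ℝ) → EuclideanSpace 𝕜 (Fin n) → ℝ)
    (hρ₀ : IsNormFun d ρ₀) (hρ₁ : IsNormFun d ρ₁)
    (p q : ℝ≥0∞) (hpq : p⁻¹ + q⁻¹ = 1) :
    IsNormFun d (interpNormFun d ρ₀ ρ₁ p q) ∧
    (∀ x u, ENNReal.ofReal (interpNormFun d ρ₀ ρ₁ p q x u) ≤
      (dualNormFun d ρ₀ x u) ^ (q⁻¹.toReal) * (ENNReal.ofReal (ρ₁ x u)) ^ (p⁻¹.toReal)) ∧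
    (∀ x v, dualNormFun d (interpNormFun d ρ₀ ρ₁ p q) x v ≤
      (ENNReal.ofReal (ρ₀ x v)) ^ (q⁻¹.toReal) * (dualNormFun d ρ₁ x v) ^ (p⁻¹.toReal)) := by
  have hφ := equivalentToNorm_interpFun hρ₀ hρ₁ hpq
  have hρ x : (fun u => ENNReal.ofReal (interpNormFun d ρ₀ ρ₁ p q x u)) =
      edual 𝕜 (edual 𝕜 (interpFun d ρ₀ ρ₁ p q x)) := by
    ext u
    rw [interpNormFun_eq hρ₀ hρ₁ hpq, ENNReal.ofReal_toReal ((hφ x).edual.edual.ne_top u)]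
  refine ⟨⟨measurable_interpNormFun hρ₀ hρ₁ hpq, fun x => ?_⟩, fun x u => ?_, fun x v => ?_⟩
  · simp_rw [interpNormFun_eq hρ₀ hρ₁ hpq]
    exact (hφ x).edual.edual.isNorm_toReal absHomogeneous_edual edual_add_le
  · exact (congrFun (hρ x) u).trans_le ((hφ x).edual_edual_le u)
  · rw [dualNormFun_eq_edual, hρ x]
    exact ((hφ x).edual.edual_edual_le v).trans <| edual_rpow_mul_rpow_le
      (hρ₀.isNorm x).equivalentToNorm_ofReal (hρ₁.isNorm x).equivalentToNorm_ofReal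
      ENNReal.toReal_nonneg ENNReal.toReal_nonneg (ENNReal.toReal_inv_add_toReal_inv hpq) v

/-- **interpolation of `A₁` norm functions.** Let `ρ₀, ρ₁` be norm functions on
`ℝᵈ × 𝔽ⁿ` in the `A₁` class with constants `C₀, C₁`, and let `1 ≤ p ≤ ∞` with conjugate
exponent `q = p'`.  Then the Minkowski functional `ρ` of the pointwise convex hull of
`{u : ρ₀*(x,u)^{1/p'} ρ₁(x,u)^{1/p} ≤ 1}` is a norm function satisfying
`ρ(x,u) ≤ ρ₀*(x,u)^{1/p'} ρ₁(x,u)^{1/p}` and `ρ*(x,v) ≤ ρ₀(x,v)^{1/p'} ρ₁*(x,v)^{1/p}`. -/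
theorem stmt18 (d : ℕ) (ρ₀ ρ₁ : (Fin d → ℝ) → EuclideanSpace 𝕜 (Fin n) → ℝ)
    (hρ₀ : IsNormFun d ρ₀) (hρ₁ : IsNormFun d ρ₁)
    (C₀ C₁ : ℝ) (hA0 : NormFunA1 d ρ₀ C₀) (hA1 : NormFunA1 d ρ₁ C₁)
    (p q : ℝ≥0∞) (hp : 1 ≤ p) (hpq : p⁻¹ + q⁻¹ = 1) :
    IsNormFun d (interpNormFun d ρ₀ ρ₁ p q) ∧
    (∀ x u, ENNReal.ofReal (interpNormFun d ρ₀ ρ₁ p q x u) ≤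
      (dualNormFun d ρ₀ x u) ^ (q⁻¹.toReal) * (ENNReal.ofReal (ρ₁ x u)) ^ (p⁻¹.toReal)) ∧
    (∀ x v, dualNormFun d (interpNormFun d ρ₀ ρ₁ p q) x v ≤
      (ENNReal.ofReal (ρ₀ x v)) ^ (q⁻¹.toReal) * (dualNormFun d ρ₁ x v) ^ (p⁻¹.toReal)) :=
  stmt18_general d ρ₀ ρ₁ hρ₀ hρ₁ p q hpq
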